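/- There exists a universal constant C > 0 such that for all integers 1 ≤ k < n the following holds. Set y_{n,k} = (n−k)/(n−1), φ(y) = y^{n-k}(1-y)^{k-1}, and q = n^{3/2} k^{-3/2} (n−k)^{-1/2}. If ε < 0 and x ∈ [0,1] satisfies x < y_{n,k}(1+ε), then | C(n,k)·∫_x^1 φ(y) dy − 1/k | ≤ C·q·exp( − min{|ε|, 1/4}² · (n−k) / 4 ), where C(n,k) is the binomial coefficient n choose k. -/

import Mathlib

/-!
With `a = n - k` and `m = k - 1`, the Beta integral gives `C(n,k) ∫₀¹ φ = 1/k`, so the quantity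
to bound is `C(n,k) ∫₀ˣ φ`. The density `φ(y) = y^a (1-y)^m` peaks at its mode
`Y = a/(a+m) = y_{n,k}`, and at `y = Y(1-t)` one has `φ(y) ≤ φ(Y) ((1-t) eᵗ)^a ≤ φ(Y) e^{-at²/2}`.
Since `x ≤ Y(1-d)` with `d = min(|ε|, 1/4)`, this bounds `∫₀ˣ φ` by `φ(Y) e^{-d²a/2}`, and
Stirling's bounds on the three factorials give `C(n,k) φ(Y) ≤ e²/(2π) · n^{3/2} k^{-3/2} (n-k)^{-1/2}`.
-/

open Real Nat

theorem integral_pow_mul_one_sub_pow_succ (a m : ℕ) :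
    (a + 1 : ℝ) * ∫ y in (0 : ℝ)..1, y ^ a * (1 - y) ^ (m + 1) =
      (m + 1) * ∫ y in (0 : ℝ)..1, y ^ (a + 1) * (1 - y) ^ m := by
  have hderiv : ∀ y ∈ Set.uIcc (0 : ℝ) 1, HasDerivAt (fun y : ℝ => y ^ (a + 1) * (1 - y) ^ (m + 1))
      ((a + 1) * (y ^ a * (1 - y) ^ (m + 1)) - (m + 1) * (y ^ (a + 1) * (1 - y) ^ m)) y := by
    intro y _
    refine ((hasDerivAt_pow (a + 1) y).fun_mul
      ((hasDerivAt_id' y).const_sub 1 |>.fun_pow (m + 1))).congr_deriv ?_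
    simp only [Nat.add_sub_cancel]
    push_cast
    ring
  have hint := intervalIntegral.integral_eq_sub_of_hasDerivAt hderiv
    ((Continuous.intervalIntegrable (by fun_prop)) _ _)
  rw [intervalIntegral.integral_sub ((Continuous.intervalIntegrable (by fun_prop)) _ _)
      ((Continuous.intervalIntegrable (by fun_prop)) _ _),
    intervalIntegral.integral_const_mul, intervalIntegral.integral_const_mul] at hint
  simp only [one_pow, sub_self, zero_pow (Nat.succ_ne_zero _), mul_zero, sub_zero] at hint
  linarith

theorem integral_pow_mul_one_sub_pow (a m : ℕ) :
    ∫ y in (0 : ℝ)..1, y ^ a * (1 - y) ^ m = a ! * m ! / (a + m + 1)! := by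
  induction m generalizing a with
  | zero =>
    simp only [pow_zero, mul_one, integral_pow, one_pow, zero_pow (Nat.succ_ne_zero a), sub_zero,
      add_zero, Nat.factorial_zero, Nat.factorial_succ]
    push_cast
    field_simp
  | succ m ih =>
    have h := integral_pow_mul_one_sub_pow_succ a m
    rw [ih, show a + 1 + m + 1 = a + (m + 1) + 1 by ring, Nat.factorial_succ a] at h
    rw [Nat.factorial_succ m, eq_div_iff (by positivity)]
    push_cast at h ⊢
    field_simp at h
    linear_combination h

theorem one_sub_mul_exp_le_exp_neg_sq_div_two {t : ℝ} (ht : 0 ≤ t) :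
    (1 - t) * exp t ≤ exp (-(t ^ 2 / 2)) := by
  set g : ℝ → ℝ := fun s => (1 - s) * exp (s + s ^ 2 / 2)
  have hg : ∀ s, HasDerivAt g (-(s ^ 2 * exp (s + s ^ 2 / 2))) s := by
    intro s
    refine (((hasDerivAt_id' s).const_sub 1).fun_mul
      (((hasDerivAt_id' s).fun_add ((hasDerivAt_pow 2 s).div_const 2)).exp)).congr_deriv ?_
    push_cast
    ring
  have hanti : Antitone g := antitone_of_deriv_nonpos (fun s => (hg s).differentiableAt)
    (fun s => (hg s).deriv ▸ by simp only [neg_nonpos]; positivity)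
  have h : g t ≤ g 0 := hanti ht
  simp only [g, exp_add] at h
  rw [exp_neg, ← one_div, le_div_iff₀ (exp_pos _)]
  simpa [mul_assoc] using h

theorem pow_mul_one_sub_pow_le_of_le_mode {a m : ℕ} (ha : 0 < a) {d y : ℝ} (hd : 0 ≤ d)
    (hy₀ : 0 ≤ y) (hy : y ≤ a / (a + m) * (1 - d)) :
    y ^ a * (1 - y) ^ m ≤ (a / (a + m)) ^ a * (m / (a + m)) ^ m * exp (-(d ^ 2 * a / 2)) := by
  have ha' : (0 : ℝ) < a := by exact_mod_cast ha
  set Y : ℝ := a / (a + m)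
  have hY : 0 < Y := by positivity
  set t := 1 - y / Y
  have hyt : y = Y * (1 - t) := by simp only [t, sub_sub_cancel]; field_simp
  have hdt : d ≤ t := by
    have : y / Y ≤ 1 - d := by rwa [div_le_iff₀ hY, mul_comm]
    linarith
  have ht₀ : 0 ≤ t := hd.trans hdt
  have ht : 0 ≤ 1 - t := by simp only [t, sub_sub_cancel]; positivity
  have hfirst : (1 - y) ^ m ≤ (m / (a + m)) ^ m * exp (t * a) := by
    rcases m.eq_zero_or_pos with rfl | hm
    · simpa using one_le_exp (mul_nonneg ht₀ ha'.le)
    · have hm' : (0 : ℝ) < m := by exact_mod_cast hm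
      have hsplit : 1 - y = m / (a + m) * (1 + t * a / m) := by
        rw [hyt]; simp only [Y]; field_simp; ring
      rw [hsplit, mul_pow]
      gcongr
      calc (1 + t * a / m) ^ m ≤ exp (t * a / m) ^ m := by
            gcongr
            linarith [add_one_le_exp (t * a / m)]
        _ = exp (t * a) := by rw [← exp_nat_mul]; field_simp
  have hsecond : ((1 - t) * exp t) ^ a ≤ exp (-(d ^ 2 * a / 2)) :=
    calc ((1 - t) * exp t) ^ a ≤ exp (-(t ^ 2 / 2)) ^ a :=
          pow_le_pow_left₀ (mul_nonneg ht (exp_pos t).le)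
            (one_sub_mul_exp_le_exp_neg_sq_div_two ht₀) a
      _ = exp (-(t ^ 2 * a / 2)) := by rw [← exp_nat_mul]; ring_nf
      _ ≤ exp (-(d ^ 2 * a / 2)) := by gcongr
  calc y ^ a * (1 - y) ^ m = Y ^ a * (1 - t) ^ a * (1 - y) ^ m := by
        rw [← mul_pow, ← hyt]
    _ ≤ Y ^ a * (1 - t) ^ a * ((m / (a + m)) ^ m * exp (t * a)) := by gcongr
    _ = Y ^ a * (m / (a + m)) ^ m * ((1 - t) * exp t) ^ a := by
        rw [mul_pow, ← exp_nat_mul]; ring_nf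
    _ ≤ Y ^ a * (m / (a + m)) ^ m * exp (-(d ^ 2 * a / 2)) := by gcongr

theorem factorial_le_exp_one_mul_sqrt {n : ℕ} (hn : n ≠ 0) :
    (n ! : ℝ) ≤ exp 1 * √n * (n / exp 1) ^ n := by
  obtain ⟨j, rfl⟩ := Nat.exists_eq_succ_of_ne_zero hn
  have h : Stirling.stirlingSeq (j + 1) ≤ Stirling.stirlingSeq 1 :=
    Stirling.stirlingSeq'_antitone (Nat.zero_le j)
  rw [Stirling.stirlingSeq, Stirling.stirlingSeq_one, div_le_iff₀ (by positivity)] at h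
  calc ((j + 1) ! : ℝ) ≤ exp 1 / √2 * (√(2 * ↑(j + 1)) * (↑(j + 1) / exp 1) ^ (j + 1)) := h
    _ = _ := by rw [sqrt_mul zero_le_two]; field_simp

theorem choose_le_stirling {n k : ℕ} (hk : 0 < k) (hkn : k < n) :
    (n.choose k : ℝ) ≤
      exp 1 / (2 * π) * √(n / (k * (n - k))) * (n ^ n / (k ^ k * ((n : ℝ) - k) ^ (n - k))) := by
  obtain ⟨a, rfl⟩ : ∃ a, n = k + a := ⟨n - k, by omega⟩
  have hK : (0 : ℝ) < k := by exact_mod_cast hk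
  have hA : (0 : ℝ) < a := by exact_mod_cast (by omega : 0 < a)
  simp only [Nat.add_sub_cancel_left, Nat.cast_add, add_sub_cancel_left]
  have hfact : ((k + a).choose k : ℝ) * (k ! * a !) = (k + a) ! := by
    have h := Nat.choose_mul_factorial_mul_factorial (Nat.le_add_right k a)
    rw [Nat.add_sub_cancel_left] at h
    rw [← mul_assoc]
    exact_mod_cast h
  set L := √(2 * π * k) * (k / exp 1) ^ k * (√(2 * π * a) * (a / exp 1) ^ a)
  have hL : 0 < L := by positivity
  have hlower : L ≤ k ! * a ! :=
    mul_le_mul (Stirling.le_factorial_stirling k) (Stirling.le_factorial_stirling a)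
      (by positivity) (by positivity)
  have hupper := factorial_le_exp_one_mul_sqrt (n := k + a) (by omega)
  push_cast at hupper
  have hidentity :
      exp 1 / (2 * π) * √((k + a) / (k * a)) * ((k + a) ^ (k + a) / (k ^ k * a ^ a)) * L =
        exp 1 * √(k + a) * ((k + a) / exp 1) ^ (k + a) := by
    have h2π : √(2 * π) ^ 2 = 2 * π := sq_sqrt (by positivity)
    simp only [L, div_pow]
    rw [sqrt_div' _ (by positivity), sqrt_mul hK.le, sqrt_mul' (2 * π) hK.le,
      sqrt_mul' (2 * π) hA.le]
    field_simp
    rw [h2π]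
    ring
  refine le_of_mul_le_mul_right ?_ hL
  calc ((k + a).choose k : ℝ) * L ≤ ((k + a).choose k : ℝ) * (k ! * a !) := by gcongr
    _ ≤ _ := by rw [hfact, hidentity]; exact hupper

theorem pow_le_exp_one_mul_mul_pred_pow {n : ℕ} (hn : 0 < n) :
    (n : ℝ) ^ n ≤ exp 1 * n * ((n : ℝ) - 1) ^ (n - 1) := by
  obtain ⟨N, rfl⟩ := Nat.exists_eq_add_of_lt hn
  simp only [zero_add, Nat.add_sub_cancel, Nat.cast_add, Nat.cast_one, add_sub_cancel_right]
  suffices h : ((N : ℝ) + 1) ^ N ≤ exp 1 * N ^ N by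
    rw [pow_succ]; nlinarith [show (0 : ℝ) ≤ N by positivity]
  rcases N.eq_zero_or_pos with rfl | hN
  · simp
  have hN' : (0 : ℝ) < N := by exact_mod_cast hN
  calc ((N : ℝ) + 1) ^ N = (N * (1 / N + 1)) ^ N := by field_simp; ring
    _ ≤ (N * exp (1 / N)) ^ N := by gcongr; exact add_one_le_exp _
    _ = exp 1 * N ^ N := by rw [mul_pow, ← exp_nat_mul, mul_one_div_cancel hN'.ne']; ring

theorem pred_pow_pred_mul_le_pow {k : ℕ} (hk : 0 < k) :
    ((k : ℝ) - 1) ^ (k - 1) * k ≤ (k : ℝ) ^ k := by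
  obtain ⟨m, rfl⟩ := Nat.exists_eq_add_of_lt hk
  simp only [zero_add, Nat.add_sub_cancel, Nat.cast_add, Nat.cast_one, add_sub_cancel_right]
  rw [pow_succ]
  gcongr
  linarith

theorem choose_mul_mode_le {n k : ℕ} (hk : 0 < k) (hkn : k < n) :
    (n.choose k : ℝ) * (((n : ℝ) - k) / (n - 1)) ^ (n - k) * (((k : ℝ) - 1) / (n - 1)) ^ (k - 1) ≤
      exp 1 ^ 2 / (2 * π) * (n / k * √(n / (k * (n - k)))) := by
  have hK : (1 : ℝ) ≤ k := by exact_mod_cast hk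
  have hKN : (k : ℝ) + 1 ≤ n := by exact_mod_cast hkn
  have hA : (0 : ℝ) < n - k := by linarith
  have hN : (0 : ℝ) < n - 1 := by linarith
  set S := √(n / (k * (n - k)))
  calc (n.choose k : ℝ) * ((n - k) / (n - 1)) ^ (n - k) * ((k - 1) / (n - 1)) ^ (k - 1)
      ≤ exp 1 / (2 * π) * S * (n ^ n / (k ^ k * ((n : ℝ) - k) ^ (n - k))) *
          ((n - k) / (n - 1)) ^ (n - k) * ((k - 1) / (n - 1)) ^ (k - 1) := by
        gcongr
        exact choose_le_stirling hk hkn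
    _ = exp 1 / (2 * π) * S * (n ^ n / ((n : ℝ) - 1) ^ (n - 1)) *
          (((k : ℝ) - 1) ^ (k - 1) / k ^ k) := by
        rw [div_pow, div_pow, show n - 1 = (n - k) + (k - 1) by omega, pow_add]
        field_simp
    _ ≤ exp 1 / (2 * π) * S * (exp 1 * n) * (1 / k) := by
        gcongr exp 1 / (2 * π) * S * ?_ * ?_
        · rw [div_le_iff₀ (by positivity)]
          exact pow_le_exp_one_mul_mul_pred_pow (by omega)
        · rw [div_le_div_iff₀ (by positivity) (by positivity), one_mul]
          exact pred_pow_pred_mul_le_pow hk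
    _ = exp 1 ^ 2 / (2 * π) * (n / k * S) := by ring

theorem div_mul_sqrt_div_eq_rpow {x y z : ℝ} (hx : 0 < x) (hy : 0 < y) (hz : 0 < z) :
    x / y * √(x / (y * z)) = x ^ ((3 : ℝ) / 2) * y ^ (-(3 : ℝ) / 2) * z ^ (-(1 : ℝ) / 2) := by
  have h32 : ∀ {w : ℝ}, 0 < w → w ^ ((3 : ℝ) / 2) = w * √w := fun hw => by
    rw [show (3 : ℝ) / 2 = 1 + 1 / 2 by norm_num, rpow_add hw, rpow_one, sqrt_eq_rpow]
  rw [neg_div, rpow_neg hy.le, h32 hy, h32 hx, neg_div, rpow_neg hz.le, ← sqrt_eq_rpow,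
    sqrt_div' _ (by positivity), sqrt_mul hy.le]
  field_simp

theorem norm_integral_pow_mul_one_sub_pow_le {n k : ℕ} (hk : 0 < k) (hkn : k < n) {d x : ℝ}
    (hd : 0 ≤ d) (hx₀ : 0 ≤ x) (hx₁ : x ≤ 1) (hxd : x ≤ ((n : ℝ) - k) / (n - 1) * (1 - d)) :
    ‖∫ y in (0 : ℝ)..x, y ^ (n - k) * (1 - y) ^ (k - 1)‖ ≤
      (((n : ℝ) - k) / (n - 1)) ^ (n - k) * (((k : ℝ) - 1) / (n - 1)) ^ (k - 1) *
        exp (-(d ^ 2 * ((n : ℝ) - k) / 2)) := by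
  have hK : (1 : ℝ) ≤ k := by exact_mod_cast hk
  have hKN : (k : ℝ) + 1 ≤ n := by exact_mod_cast hkn
  have hφ : ∀ y ∈ Set.uIoc 0 x, ‖y ^ (n - k) * (1 - y) ^ (k - 1)‖ ≤
      (((n : ℝ) - k) / (n - 1)) ^ (n - k) * (((k : ℝ) - 1) / (n - 1)) ^ (k - 1) *
        exp (-(d ^ 2 * ((n : ℝ) - k) / 2)) := by
    rintro y ⟨hy₀, hyx⟩
    rw [min_eq_left hx₀] at hy₀
    rw [max_eq_right hx₀] at hyx
    have h := pow_mul_one_sub_pow_le_of_le_mode (a := n - k) (m := k - 1) (by omega) hd hy₀.le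
    push_cast [hkn.le, hk] at h
    rw [show (n : ℝ) - k + (k - 1) = n - 1 by ring] at h
    rw [Real.norm_of_nonneg (mul_nonneg (pow_nonneg hy₀.le _) (pow_nonneg (by linarith) _))]
    exact h (hyx.trans hxd)
  have hint := intervalIntegral.norm_integral_le_of_norm_le_const hφ
  rw [sub_zero, abs_of_nonneg hx₀] at hint
  refine hint.trans (mul_le_of_le_one_right ?_ hx₁)
  have hY : 0 ≤ ((n : ℝ) - k) / (n - 1) := div_nonneg (by linarith) (by linarith)
  have hY' : 0 ≤ ((k : ℝ) - 1) / (n - 1) := div_nonneg (by linarith) (by linarith)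
  exact mul_nonneg (mul_nonneg (pow_nonneg hY _) (pow_nonneg hY' _)) (exp_pos _).le

theorem choose_mul_integral_zero_one {n k : ℕ} (hk : 0 < k) (hkn : k ≤ n) :
    (n.choose k : ℝ) * ∫ y in (0 : ℝ)..1, y ^ (n - k) * (1 - y) ^ (k - 1) = 1 / k := by
  rw [integral_pow_mul_one_sub_pow, show n - k + (k - 1) + 1 = n by omega,
    ← Nat.choose_mul_factorial_mul_factorial hkn, ← Nat.mul_factorial_pred hk.ne']
  have hC : (n.choose k : ℝ) ≠ 0 := by exact_mod_cast (Nat.choose_pos hkn).ne'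
  push_cast
  field_simp

theorem choose_mul_integral_sub_inv_eq {n k : ℕ} (hk : 0 < k) (hkn : k ≤ n) (x : ℝ) :
    (n.choose k : ℝ) * (∫ y in x..1, y ^ (n - k) * (1 - y) ^ (k - 1)) - 1 / k =
      -((n.choose k : ℝ) * ∫ y in (0 : ℝ)..x, y ^ (n - k) * (1 - y) ^ (k - 1)) := by
  rw [← choose_mul_integral_zero_one hk hkn, ← intervalIntegral.integral_interval_sub_left
    ((Continuous.intervalIntegrable (by fun_prop)) _ _)
    ((Continuous.intervalIntegrable (by fun_prop)) _ _)]
  ring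

/-- Lemma 8 (bound on `B₂`, subcritical side): with `y_{n,k} = (n−k)/(n−1)`,
`φ(y) = y^{n-k}(1-y)^{k-1}` and `q = n^{3/2} k^{-3/2} (n−k)^{-1/2}`, if `ε < 0` and
`x ∈ [0,1]` with `x < y_{n,k}(1+ε)`, then
`|C(n,k)·∫_x^1 φ − 1/k| ≤ C·q·exp(−min{|ε|,1/4}²·(n−k)/4)`. -/
theorem B2_bound_subcritical :
    ∃ C > (0 : ℝ), ∀ n k : ℕ, 1 ≤ k → k < n → ∀ ε : ℝ, ε < 0 →
      ∀ x : ℝ, x ∈ Set.Icc (0 : ℝ) 1 →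
        x < ((n : ℝ) - k) / ((n : ℝ) - 1) * (1 + ε) →
        |(n.choose k : ℝ) * (∫ y in x..(1 : ℝ), y ^ (n - k) * (1 - y) ^ (k - 1)) -
            1 / (k : ℝ)| ≤
          C * ((n : ℝ) ^ ((3 : ℝ) / 2) * (k : ℝ) ^ (-(3 : ℝ) / 2) *
                ((n : ℝ) - k) ^ (-(1 : ℝ) / 2)) *
            Real.exp (-((min |ε| (1 / 4)) ^ 2 * ((n : ℝ) - k) / 4)) := by
  refine ⟨exp 1 ^ 2 / (2 * π), by positivity, ?_⟩
  intro n k hk hkn ε hε x ⟨hx₀, hx₁⟩ hxε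
  have hK : (1 : ℝ) ≤ k := by exact_mod_cast hk
  have hKN : (k : ℝ) + 1 ≤ n := by exact_mod_cast hkn
  set d := min |ε| (1 / 4)
  have hd : 0 ≤ d := le_min (abs_nonneg ε) (by norm_num)
  have hxd : x ≤ ((n : ℝ) - k) / (n - 1) * (1 - d) := by
    refine hxε.le.trans (mul_le_mul_of_nonneg_left ?_ (div_nonneg (by linarith) (by linarith)))
    linarith [min_le_left |ε| (1 / 4), abs_of_neg hε]
  rw [choose_mul_integral_sub_inv_eq hk hkn.le, abs_neg, abs_mul, Nat.abs_cast, ← Real.norm_eq_abs,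
    ← div_mul_sqrt_div_eq_rpow (by linarith) (by linarith) (by linarith)]
  calc (n.choose k : ℝ) * ‖∫ y in (0 : ℝ)..x, y ^ (n - k) * (1 - y) ^ (k - 1)‖
      ≤ (n.choose k : ℝ) * ((((n : ℝ) - k) / (n - 1)) ^ (n - k) *
          (((k : ℝ) - 1) / (n - 1)) ^ (k - 1) * exp (-(d ^ 2 * ((n : ℝ) - k) / 2))) := by
        gcongr
        exact norm_integral_pow_mul_one_sub_pow_le hk hkn hd hx₀ hx₁ hxd
    _ ≤ _ := by
        rw [← mul_assoc, ← mul_assoc]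
        refine mul_le_mul (choose_mul_mode_le hk hkn) (exp_le_exp.mpr ?_) (exp_pos _).le
          (by positivity)
        linarith [mul_nonneg (sq_nonneg d) (by linarith : (0 : ℝ) ≤ n - k)]
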